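/- (Infinitesimal rigidity of the letter-wall configuration, Proposition 8.1.) Let Ḋ, Ė, Ḟ ∈ ℝ^{1,4} satisfy: ⟨Ḋ, A⟩ = ⟨Ḋ, B⟩ = ⟨Ḋ, D⟩ = 0 and the fourth spatial coordinate of Ḋ vanishes (Ḋ 4 = 0); ⟨Ė, A⟩ = ⟨Ė, C⟩ = ⟨Ė, E⟩ = 0; ⟨Ḟ, B⟩ = ⟨Ḟ, C⟩ = ⟨Ḟ, F⟩ = 0; and the infinitesimal tangency conditions ⟨Ė, D⟩ + ⟨E, Ḋ⟩ = 0, ⟨Ḟ, D⟩ + ⟨F, Ḋ⟩ = 0, and ⟨Ė, F⟩ + ⟨E, Ḟ⟩ = 0. Then Ḋ = 0, and there exist real numbers ε and φ with Ė = (0,0,0,0,ε) and Ḟ = (0,0,0,0,φ). (Thus any norm-preserving infinitesimal deformation of the six letter walls preserving their tangencies, normalized so that Ȧ = Ḃ = Ċ = 0 and Ḋ ⊥ e₄, fixes the D wall and moves the E and F walls only in the e₄ direction.) -/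
import Mathlib


/-- The Minkowski inner product on `ℝ^{1,4}`, identified with `Fin 5 → ℝ`. -/
noncomputable def mink (v w : Fin 5 → ℝ) : ℝ :=
  -(v 0 * w 0) + v 1 * w 1 + v 2 * w 2 + v 3 * w 3 + v 4 * w 4

/-- The positive octet space-like vectors of the deformed 24-cell (Table 6.1). -/
noncomputable def Pvec (t : ℝ) (ε : Fin 3 → ℝ) : Fin 5 → ℝ :=
  ![Real.sqrt 2, ε 0, ε 1, ε 2, (ε 0 * ε 1 * ε 2) / t]

/-- The negative octet space-like vectors of the deformed 24-cell (Table 6.1). -/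
noncomputable def Nvec (t : ℝ) (ε : Fin 3 → ℝ) : Fin 5 → ℝ :=
  ![Real.sqrt 2, ε 0, ε 1, ε 2, -((ε 0 * ε 1 * ε 2) * t)]

/-- The letter vector `A`. -/
noncomputable def lA : Fin 5 → ℝ := ![1, Real.sqrt 2, 0, 0, 0]
/-- The letter vector `B`. -/
noncomputable def lB : Fin 5 → ℝ := ![1, 0, Real.sqrt 2, 0, 0]
/-- The letter vector `C`. -/
noncomputable def lC : Fin 5 → ℝ := ![1, 0, 0, Real.sqrt 2, 0]
/-- The letter vector `D`. -/
noncomputable def lD : Fin 5 → ℝ := ![1, 0, 0, -Real.sqrt 2, 0]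
/-- The letter vector `E`. -/
noncomputable def lE : Fin 5 → ℝ := ![1, 0, -Real.sqrt 2, 0, 0]
/-- The letter vector `F`. -/
noncomputable def lF : Fin 5 → ℝ := ![1, -Real.sqrt 2, 0, 0, 0]

/-- Infinitesimal rigidity of the letter-wall configuration (Proposition 8.1): a
norm-preserving infinitesimal deformation of the six letter walls preserving their
tangencies, normalized so that `Ȧ = Ḃ = Ċ = 0` and `Ḋ ⊥ e₄`, fixes the `D` wall and
moves the `E` and `F` walls only in the `e₄` direction. -/
theorem letter_walls_infinitesimally_rigid (dD dE dF : Fin 5 → ℝ)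
    (hDA : mink dD lA = 0) (hDB : mink dD lB = 0) (hDD : mink dD lD = 0)
    (hD4 : dD 4 = 0)
    (hEA : mink dE lA = 0) (hEC : mink dE lC = 0) (hEE : mink dE lE = 0)
    (hFB : mink dF lB = 0) (hFC : mink dF lC = 0) (hFF : mink dF lF = 0)
    (hED : mink dE lD + mink lE dD = 0)
    (hFD : mink dF lD + mink lF dD = 0)
    (hEF : mink dE lF + mink lE dF = 0) :
    dD = 0 ∧ ∃ ε φ : ℝ, dE = ![0, 0, 0, 0, ε] ∧ dF = ![0, 0, 0, 0, φ] := by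
  have hs : (0:ℝ) < Real.sqrt 2 := Real.sqrt_pos.mpr (by norm_num)
  set s := Real.sqrt 2 with hsdef
  simp only [mink, lA, lB, lC, lD, lE, lF, Matrix.cons_val_zero, Matrix.cons_val_one,
    Matrix.head_cons, Matrix.cons_val_two, Matrix.tail_cons, Matrix.cons_val_three,
    Matrix.cons_val_four, Matrix.cons_val_fin_one, mul_zero, add_zero, mul_one, one_mul,
    zero_mul, zero_add, mul_neg, neg_mul, neg_neg] at hDA hDB hDD hEA hEC hEE hFB hFC hFF hED hFD hEF
  have hsne := ne_of_gt hs
  have hd0 : dD 0 = 0 := by linarith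
  have key : ∀ x : ℝ, x * s = 0 → x = 0 := fun x hx =>
    (mul_eq_zero.mp hx).resolve_right hsne
  have hd1 : dD 1 = 0 := key _ (by linarith)
  have hd2 : dD 2 = 0 := key _ (by linarith)
  have hd3 : dD 3 = 0 := key _ (by linarith)
  have he0 : dE 0 = 0 := by linarith
  have he1 : dE 1 = 0 := key _ (by linarith)
  have he2 : dE 2 = 0 := key _ (by linarith)
  have he3 : dE 3 = 0 := key _ (by linarith)
  have hf0 : dF 0 = 0 := by linarith
  have hf1 : dF 1 = 0 := key _ (by linarith)
  have hf2 : dF 2 = 0 := key _ (by linarith)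
  have hf3 : dF 3 = 0 := key _ (by linarith)
  refine ⟨?_, dE 4, dF 4, ?_, ?_⟩ <;> funext i <;> fin_cases i <;>
    simp [hd0, hd1, hd2, hd3, hD4, he0, he1, he2, he3, hf0, hf1, hf2, hf3]
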